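/- Let L be a regular-epi localization functor on the category XMod of crossed modules of groups. Then L is conditionally flat if and only if L is admissible for the class of regular epimorphisms. -/

import Mathlib

set_option linter.unusedVariables false

/-- A crossed module of groups `(M, G, d)` with `G` acting on `M`. -/
structure XMod : Type 1 where
  M : Type
  G : Type
  [grpM : Group M]
  [grpG : Group G]
  act : G →* MulAut M
  d : M →* G
  act_d : ∀ (b : G) (t : M), d (act b t) = b * d t * b⁻¹
  peiffer : ∀ (t s : M), act (d t) s = t * s * t⁻¹

attribute [instance] XMod.grpM XMod.grpG

/-- A morphism of crossed modules. -/
structure XModHom (N T : XMod) where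
  f1 : N.M →* T.M
  f2 : N.G →* T.G
  comm_d : ∀ n, T.d (f1 n) = f2 (N.d n)
  equiv : ∀ (b : N.G) (n : N.M), f1 (N.act b n) = T.act (f2 b) (f1 n)

namespace XModHom

theorem ext {N T : XMod} {f g : XModHom N T} (h1 : f.f1 = g.f1) (h2 : f.f2 = g.f2) :
    f = g := by
  cases f; cases g; cases h1; cases h2; rfl

/-- The identity morphism. -/
def id (T : XMod) : XModHom T T :=
  ⟨MonoidHom.id _, MonoidHom.id _, fun _ => rfl, fun _ _ => rfl⟩

/-- Composition of morphisms of crossed modules. -/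
def comp {A B C : XMod} (g : XModHom B C) (f : XModHom A B) : XModHom A C where
  f1 := g.f1.comp f.f1
  f2 := g.f2.comp f.f2
  comm_d := by intro n; simp [MonoidHom.comp_apply, g.comm_d, f.comm_d]
  equiv := by intro b n; simp [MonoidHom.comp_apply, f.equiv, g.equiv]

/-- The trivial morphism of crossed modules. -/
def triv (A B : XMod) : XModHom A B where
  f1 := 1
  f2 := 1
  comm_d := by intro n; simp
  equiv := by intro b n; simp

/-- A morphism of crossed modules is an isomorphism if it has a two-sided inverse. -/
def IsIso {A B : XMod} (f : XModHom A B) : Prop :=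
  ∃ g : XModHom B A, comp g f = id A ∧ comp f g = id B

/-- Regular epimorphisms of crossed modules are exactly the componentwise
surjective morphisms. -/
def RegEpi {A B : XMod} (f : XModHom A B) : Prop :=
  Function.Surjective f.f1 ∧ Function.Surjective f.f2

/-- `κ` is a kernel of `α` (in the categorical sense). -/
def IsKernelOf {N T Q : XMod} (κ : XModHom N T) (α : XModHom T Q) : Prop :=
  comp α κ = triv N Q ∧
    ∀ (X : XMod) (u : XModHom X T), comp α u = triv X Q →
      ∃! v : XModHom X N, comp κ v = u

end XModHom

/-- `1 → N → T → Q → 1` is a short exact sequence of crossed modules. -/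
def ShortExact {N T Q : XMod} (κ : XModHom N T) (α : XModHom T Q) : Prop :=
  XModHom.IsKernelOf κ α ∧ XModHom.RegEpi α
/-- A localization functor (coaugmented idempotent functor) on `XMod`. -/
structure LocalizationFunctor where
  obj : XMod → XMod
  map : ∀ {A B : XMod}, XModHom A B → XModHom (obj A) (obj B)
  map_id : ∀ A : XMod, map (XModHom.id A) = XModHom.id (obj A)
  map_comp : ∀ {A B C : XMod} (f : XModHom A B) (g : XModHom B C),
    map (XModHom.comp g f) = XModHom.comp (map g) (map f)
  ell : ∀ A : XMod, XModHom A (obj A)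
  natural : ∀ {A B : XMod} (f : XModHom A B),
    XModHom.comp (ell B) f = XModHom.comp (map f) (ell A)
  iso_ell_obj : ∀ A : XMod, XModHom.IsIso (ell (obj A))
  iso_map_ell : ∀ A : XMod, XModHom.IsIso (map (ell A))

namespace LocalizationFunctor

/-- A crossed module is `L`-local if its coaugmentation is an isomorphism. -/
def IsLocal (L : LocalizationFunctor) (X : XMod) : Prop :=
  XModHom.IsIso (L.ell X)

/-- `L` is a regular-epi localization if every coaugmentation morphism is a
regular epimorphism. -/
def RegEpiLoc (L : LocalizationFunctor) : Prop :=
  ∀ X : XMod, XModHom.RegEpi (L.ell X)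

/-- A short exact sequence is `L`-flat if applying `L` yields a short exact sequence. -/
def LFlat (L : LocalizationFunctor) {N T Q : XMod} (κ : XModHom N T) (α : XModHom T Q) : Prop :=
  ShortExact (L.map κ) (L.map α)

end LocalizationFunctor
section Pullback

variable {T Q Q' : XMod} (α : XModHom T Q) (g : XModHom Q' Q)

/-- Level-1 part of the pullback `T ×_Q Q'`, computed componentwise. -/
def pbM : Subgroup (T.M × Q'.M) where
  carrier := {p | α.f1 p.1 = g.f1 p.2}
  one_mem' := by simp
  mul_mem' := by
    intro a b ha hb
    simp only [Set.mem_setOf_eq, Prod.fst_mul, Prod.snd_mul, map_mul] at *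
    rw [ha, hb]
  inv_mem' := by
    intro a ha
    simp only [Set.mem_setOf_eq, Prod.fst_inv, Prod.snd_inv, map_inv] at *
    rw [ha]

/-- Level-2 part of the pullback `T ×_Q Q'`, computed componentwise. -/
def pbG : Subgroup (T.G × Q'.G) where
  carrier := {p | α.f2 p.1 = g.f2 p.2}
  one_mem' := by simp
  mul_mem' := by
    intro a b ha hb
    simp only [Set.mem_setOf_eq, Prod.fst_mul, Prod.snd_mul, map_mul] at *
    rw [ha, hb]
  inv_mem' := by
    intro a ha
    simp only [Set.mem_setOf_eq, Prod.fst_inv, Prod.snd_inv, map_inv] at *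
    rw [ha]

theorem mem_pbM_iff (p : T.M × Q'.M) : p ∈ pbM α g ↔ α.f1 p.1 = g.f1 p.2 := Iff.rfl

theorem mem_pbG_iff (p : T.G × Q'.G) : p ∈ pbG α g ↔ α.f2 p.1 = g.f2 p.2 := Iff.rfl

theorem pb_act_mem {b : T.G × Q'.G} (hb : b ∈ pbG α g) {p : T.M × Q'.M}
    (hp : p ∈ pbM α g) : (T.act b.1 p.1, Q'.act b.2 p.2) ∈ pbM α g := by
  have hb' : α.f2 b.1 = g.f2 b.2 := hb
  have hp' : α.f1 p.1 = g.f1 p.2 := hp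
  show α.f1 (T.act b.1 p.1) = g.f1 (Q'.act b.2 p.2)
  rw [α.equiv, g.equiv, hb', hp']

theorem XMod.act_inv_act (X : XMod) (b : X.G) (t : X.M) :
    X.act b⁻¹ (X.act b t) = t := by
  rw [← MulAut.mul_apply, ← map_mul, inv_mul_cancel, map_one, MulAut.one_apply]

theorem XMod.act_act_inv (X : XMod) (b : X.G) (t : X.M) :
    X.act b (X.act b⁻¹ t) = t := by
  rw [← MulAut.mul_apply, ← map_mul, mul_inv_cancel, map_one, MulAut.one_apply]

/-- The action of an element of the pullback on the level-1 part, as a group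
automorphism. -/
def pbActEquiv (b : ↥(pbG α g)) : ↥(pbM α g) ≃* ↥(pbM α g) where
  toFun p := ⟨(T.act b.1.1 p.1.1, Q'.act b.1.2 p.1.2), pb_act_mem α g b.2 p.2⟩
  invFun p := ⟨(T.act b.1.1⁻¹ p.1.1, Q'.act b.1.2⁻¹ p.1.2),
    pb_act_mem α g ((pbG α g).inv_mem b.2) p.2⟩
  left_inv p := by
    apply Subtype.ext
    exact Prod.ext (T.act_inv_act _ _) (Q'.act_inv_act _ _)
  right_inv p := by
    apply Subtype.ext
    exact Prod.ext (T.act_act_inv _ _) (Q'.act_act_inv _ _)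
  map_mul' p q := by
    apply Subtype.ext
    exact Prod.ext (map_mul _ _ _) (map_mul _ _ _)

/-- The pullback `T ×_Q Q'` of `α : T → Q` along `g : Q' → Q`, computed
componentwise. -/
def pbXMod : XMod where
  M := ↥(pbM α g)
  G := ↥(pbG α g)
  act :=
    { toFun := pbActEquiv α g
      map_one' := by
        apply MulEquiv.ext
        intro p
        apply Subtype.ext
        apply Prod.ext
        · show T.act (1 : ↥(pbG α g)).1.1 p.1.1 = p.1.1
          simp
        · show Q'.act (1 : ↥(pbG α g)).1.2 p.1.2 = p.1.2
          simp
      map_mul' := by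
        intro b c
        apply MulEquiv.ext
        intro p
        apply Subtype.ext
        apply Prod.ext
        · show T.act (b * c).1.1 p.1.1 = T.act b.1.1 (T.act c.1.1 p.1.1)
          simp [map_mul]
        · show Q'.act (b * c).1.2 p.1.2 = Q'.act b.1.2 (Q'.act c.1.2 p.1.2)
          simp [map_mul] }
  d :=
    { toFun := fun p => ⟨(T.d p.1.1, Q'.d p.1.2), by
        have hp : α.f1 p.1.1 = g.f1 p.1.2 := p.2
        show α.f2 (T.d p.1.1) = g.f2 (Q'.d p.1.2)
        rw [← α.comm_d, ← g.comm_d, hp]⟩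
      map_one' := by
        apply Subtype.ext
        apply Prod.ext <;> simp
      map_mul' := by
        intro p q
        apply Subtype.ext
        apply Prod.ext <;> simp }
  act_d := by
    intro b p
    apply Subtype.ext
    apply Prod.ext
    · exact T.act_d _ _
    · exact Q'.act_d _ _
  peiffer := by
    intro p q
    apply Subtype.ext
    apply Prod.ext
    · exact T.peiffer _ _
    · exact Q'.peiffer _ _

/-- First projection of the pullback. -/
def pbFst : XModHom (pbXMod α g) T where
  f1 := (MonoidHom.fst T.M Q'.M).comp (pbM α g).subtype
  f2 := (MonoidHom.fst T.G Q'.G).comp (pbG α g).subtype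
  comm_d := fun _ => rfl
  equiv := fun _ _ => rfl

/-- Second projection of the pullback. -/
def pbSnd : XModHom (pbXMod α g) Q' where
  f1 := (MonoidHom.snd T.M Q'.M).comp (pbM α g).subtype
  f2 := (MonoidHom.snd T.G Q'.G).comp (pbG α g).subtype
  comm_d := fun _ => rfl
  equiv := fun _ _ => rfl

end Pullback
section PullbackMaps

variable {N T Q Q' : XMod}

/-- The induced morphism from the kernel `N` into the pullback `T ×_Q Q'`. -/
def pbIn (κ : XModHom N T) (α : XModHom T Q) (g : XModHom Q' Q)
    (h : XModHom.comp α κ = XModHom.triv N Q) : XModHom N (pbXMod α g) where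
  f1 :=
    { toFun := fun n => ⟨(κ.f1 n, 1), by
        show α.f1 (κ.f1 n) = g.f1 1
        have := congrArg XModHom.f1 h
        have h' : α.f1 (κ.f1 n) = 1 := DFunLike.congr_fun this n
        rw [h', map_one]⟩
      map_one' := by
        apply Subtype.ext
        apply Prod.ext <;> simp <;> first | rfl | exact map_one _
      map_mul' := by
        intro a b
        apply Subtype.ext
        show (κ.f1 (a * b), (1 : Q'.M)) = (κ.f1 a, (1 : Q'.M)) * (κ.f1 b, (1 : Q'.M))
        simp [Prod.ext_iff, map_mul] }
  f2 :=
    { toFun := fun n => ⟨(κ.f2 n, 1), by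
        show α.f2 (κ.f2 n) = g.f2 1
        have := congrArg XModHom.f2 h
        have h' : α.f2 (κ.f2 n) = 1 := DFunLike.congr_fun this n
        rw [h', map_one]⟩
      map_one' := by
        apply Subtype.ext
        apply Prod.ext <;> simp <;> first | rfl | exact map_one _
      map_mul' := by
        intro a b
        apply Subtype.ext
        show (κ.f2 (a * b), (1 : Q'.G)) = (κ.f2 a, (1 : Q'.G)) * (κ.f2 b, (1 : Q'.G))
        simp [Prod.ext_iff, map_mul] }
  comm_d := by
    intro n
    apply Subtype.ext
    apply Prod.ext
    · exact κ.comm_d n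
    · show Q'.d (1 : Q'.M) = 1
      simp
  equiv := by
    intro b n
    apply Subtype.ext
    apply Prod.ext
    · exact κ.equiv b n
    · show (1 : Q'.M) = Q'.act 1 1
      simp

/-- The induced morphism into the pullback `T ×_Q Q'` from an object mapping
trivially to `Q` through the second leg. -/
def pbInR (α : XModHom T Q) (g : XModHom Q' Q) {X : XMod} (u : XModHom X Q')
    (h : XModHom.comp g u = XModHom.triv X Q) : XModHom X (pbXMod α g) where
  f1 :=
    { toFun := fun n => ⟨(1, u.f1 n), by
        show α.f1 1 = g.f1 (u.f1 n)
        have := congrArg XModHom.f1 h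
        have h' : g.f1 (u.f1 n) = 1 := DFunLike.congr_fun this n
        rw [h', map_one]⟩
      map_one' := by
        apply Subtype.ext
        apply Prod.ext <;> simp <;> first | rfl | exact map_one _
      map_mul' := by
        intro a b
        apply Subtype.ext
        show ((1 : T.M), u.f1 (a * b)) = ((1 : T.M), u.f1 a) * ((1 : T.M), u.f1 b)
        simp [Prod.ext_iff, map_mul] }
  f2 :=
    { toFun := fun n => ⟨(1, u.f2 n), by
        show α.f2 1 = g.f2 (u.f2 n)
        have := congrArg XModHom.f2 h
        have h' : g.f2 (u.f2 n) = 1 := DFunLike.congr_fun this n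
        rw [h', map_one]⟩
      map_one' := by
        apply Subtype.ext
        apply Prod.ext <;> simp <;> first | rfl | exact map_one _
      map_mul' := by
        intro a b
        apply Subtype.ext
        show ((1 : T.G), u.f2 (a * b)) = ((1 : T.G), u.f2 a) * ((1 : T.G), u.f2 b)
        simp [Prod.ext_iff, map_mul] }
  comm_d := by
    intro n
    apply Subtype.ext
    apply Prod.ext
    · show T.d (1 : T.M) = 1
      simp
    · exact u.comm_d n
  equiv := by
    intro b n
    apply Subtype.ext
    apply Prod.ext
    · show (1 : T.M) = T.act 1 1
      simp
    · exact u.equiv b n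

/-- The morphism of pullbacks `T ×_Q Q' → E ×_Q Q'` induced by `f : T → E`
with `p ∘ f = α`. -/
def pbMapL {E : XMod} (α : XModHom T Q) (p : XModHom E Q) (g : XModHom Q' Q)
    (f : XModHom T E) (hpf : XModHom.comp p f = α) :
    XModHom (pbXMod α g) (pbXMod p g) where
  f1 :=
    { toFun := fun w => ⟨(f.f1 w.1.1, w.1.2), by
        show p.f1 (f.f1 w.1.1) = g.f1 w.1.2
        have h' : p.f1 (f.f1 w.1.1) = α.f1 w.1.1 :=
          DFunLike.congr_fun (congrArg XModHom.f1 hpf) w.1.1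
        rw [h']
        exact w.2⟩
      map_one' := by
        apply Subtype.ext
        apply Prod.ext <;> simp <;> first | rfl | exact map_one _
      map_mul' := by
        intro a b
        apply Subtype.ext
        apply Prod.ext
        · exact map_mul f.f1 a.1.1 b.1.1
        · rfl }
  f2 :=
    { toFun := fun w => ⟨(f.f2 w.1.1, w.1.2), by
        show p.f2 (f.f2 w.1.1) = g.f2 w.1.2
        have h' : p.f2 (f.f2 w.1.1) = α.f2 w.1.1 :=
          DFunLike.congr_fun (congrArg XModHom.f2 hpf) w.1.1
        rw [h']
        exact w.2⟩
      map_one' := by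
        apply Subtype.ext
        apply Prod.ext <;> simp <;> first | rfl | exact map_one _
      map_mul' := by
        intro a b
        apply Subtype.ext
        apply Prod.ext
        · exact map_mul f.f2 a.1.1 b.1.1
        · rfl }
  comm_d := by
    intro w
    apply Subtype.ext
    apply Prod.ext
    · exact f.comm_d _
    · rfl
  equiv := by
    intro b w
    apply Subtype.ext
    apply Prod.ext
    · exact f.equiv _ _
    · rfl

end PullbackMaps

/-- A commuting square is a pullback square (categorical definition). -/
def IsPullbackSquare {P X Y Z : XMod} (p1 : XModHom P X) (p2 : XModHom P Y)
    (f : XModHom X Z) (h : XModHom Y Z) : Prop :=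
  XModHom.comp f p1 = XModHom.comp h p2 ∧
    ∀ (W : XMod) (u : XModHom W X) (v : XModHom W Y),
      XModHom.comp f u = XModHom.comp h v →
        ∃! w : XModHom W P, XModHom.comp p1 w = u ∧ XModHom.comp p2 w = v

namespace LocalizationFunctor

/-- `L` is admissible for the class of regular epimorphisms: applying `L` to the
pullback of a regular epimorphism `α : LT → LQ` along the coaugmentation
`ℓ^Q : Q → LQ` yields again a pullback square. -/
def Admissible (L : LocalizationFunctor) : Prop :=
  ∀ (T Q : XMod) (α : XModHom (L.obj T) (L.obj Q)), XModHom.RegEpi α →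
    IsPullbackSquare (L.map (pbFst α (L.ell Q))) (L.map (pbSnd α (L.ell Q)))
      (L.map α) (L.map (L.ell Q))

/-- `L` is conditionally flat: the pullback of any `L`-flat short exact sequence
along any morphism is again `L`-flat. -/
def ConditionallyFlat (L : LocalizationFunctor) : Prop :=
  ∀ (N T Q : XMod) (κ : XModHom N T) (α : XModHom T Q) (hse : ShortExact κ α),
    L.LFlat κ α →
      ∀ (Q' : XMod) (g : XModHom Q' Q),
        L.LFlat (pbIn κ α g hse.1.1) (pbSnd α g)

/-- A short exact sequence `1 → N → T → Q → 1` admits a fiberwise localization: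
there is a short exact sequence `1 → LN → E → Q → 1` together with an
`L`-equivalence `T → E` compatible with the coaugmentation of `N`. -/
def AdmitsFiberwise (L : LocalizationFunctor) {N T Q : XMod} (κ : XModHom N T)
    (α : XModHom T Q) : Prop :=
  ∃ (E : XMod) (j : XModHom (L.obj N) E) (p : XModHom E Q) (e : XModHom T E),
    ShortExact j p ∧ XModHom.IsIso (L.map e) ∧
      XModHom.comp e κ = XModHom.comp j (L.ell N) ∧ XModHom.comp p e = α

end LocalizationFunctor
section Kernel

variable {N T : XMod} (f : XModHom N T)

theorem ker_act_mem {b : N.G} (hb : b ∈ f.f2.ker) {n : N.M} (hn : n ∈ f.f1.ker) :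
    N.act b n ∈ f.f1.ker := by
  have hb' : f.f2 b = 1 := hb
  have hn' : f.f1 n = 1 := hn
  show f.f1 (N.act b n) = 1
  rw [f.equiv, hb', hn', map_one]

/-- The automorphism of `ker f.f1` induced by an element of `ker f.f2`. -/
def kerActEquiv (b : ↥f.f2.ker) : ↥f.f1.ker ≃* ↥f.f1.ker where
  toFun n := ⟨N.act b.1 n.1, ker_act_mem f b.2 n.2⟩
  invFun n := ⟨N.act b.1⁻¹ n.1, ker_act_mem f (f.f2.ker.inv_mem b.2) n.2⟩
  left_inv n := Subtype.ext (N.act_inv_act _ _)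
  right_inv n := Subtype.ext (N.act_act_inv _ _)
  map_mul' n m := Subtype.ext (map_mul _ _ _)

/-- The kernel of a morphism of crossed modules, computed componentwise. -/
def kerXMod : XMod where
  M := ↥f.f1.ker
  G := ↥f.f2.ker
  act :=
    { toFun := kerActEquiv f
      map_one' := by
        apply MulEquiv.ext
        intro n
        apply Subtype.ext
        show N.act (1 : ↥f.f2.ker).1 n.1 = n.1
        simp
      map_mul' := by
        intro b c
        apply MulEquiv.ext
        intro n
        apply Subtype.ext
        show N.act (b * c).1 n.1 = N.act b.1 (N.act c.1 n.1)
        simp [map_mul] }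
  d :=
    { toFun := fun n => ⟨N.d n.1, by
        have hn : f.f1 n.1 = 1 := n.2
        show f.f2 (N.d n.1) = 1
        rw [← f.comm_d, hn, map_one]⟩
      map_one' := by
        apply Subtype.ext
        simp
      map_mul' := by
        intro a b
        apply Subtype.ext
        show N.d (a * b).1 = N.d a.1 * N.d b.1
        simp }
  act_d := by
    intro b n
    apply Subtype.ext
    exact N.act_d _ _
  peiffer := by
    intro n m
    apply Subtype.ext
    exact N.peiffer _ _

/-- The inclusion of the kernel. -/
def kerIncl : XModHom (kerXMod f) N where
  f1 := f.f1.ker.subtype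
  f2 := f.f2.ker.subtype
  comm_d := fun _ => rfl
  equiv := fun _ _ => rfl

end Kernel

/-- A crossed module is trivial if both underlying groups are trivial. -/
def XMod.IsTrivial (X : XMod) : Prop :=
  (∀ m : X.M, m = 1) ∧ ∀ b : X.G, b = 1

/-- `X` is `A`-null if the only morphism of crossed modules `A → X` is the
trivial one. -/
def ANull (A X : XMod) : Prop :=
  ∀ φ : XModHom A X, φ = XModHom.triv A X

/-- `X` is `f`-local if precomposition with `f` is a bijection on morphisms
into `X`. -/
def FLocal {B C : XMod} (f : XModHom B C) (X : XMod) : Prop :=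
  Function.Bijective fun φ : XModHom C X => XModHom.comp φ f

/-- The subgroup `[N₂, N₁]` of `N₁` generated by the elements `ᵇt·t⁻¹`. -/
def actCommutator (N : XMod) : Subgroup N.M :=
  Subgroup.closure {x | ∃ (b : N.G) (t : N.M), x = N.act b t * t⁻¹}

section NormalClosure

variable {A W : XMod} (φ : XModHom A W)

/-- The level-2 part of the normal closure of the image of `φ`:
the normal closure of `φ₂(A₂)` in `W₂`. -/
def ncl2 : Subgroup W.G :=
  Subgroup.normalClosure (Set.range φ.f2)

/-- The level-1 part of the normal closure of the image of `φ`: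
the subgroup `φ₁(A₁)^{W₂}·[φ₂(A₂)^{W₂}, W₁]` of `W₁`. -/
def ncl1 : Subgroup W.M :=
  Subgroup.closure
    ({x | ∃ (b : W.G) (m : A.M), x = W.act b (φ.f1 m)} ∪
      {x | ∃ s ∈ ncl2 φ, ∃ w : W.M, x = W.act s w * w⁻¹})

end NormalClosure

/-!
Kernels and pullbacks of crossed modules are computed componentwise, so a morphism between two
extensions of the same crossed module is controlled by what it does on the kernels (short five
lemma), and local crossed modules are closed under kernels and pullbacks.

If `L` is conditionally flat, the extension `ker α → LT → LQ` of local objects is `L`-flat, hence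
so is its pullback along `ℓ^Q`; after localizing, it maps to the pullback of `L α` along `L ℓ^Q`
by a morphism of extensions of `LQ` which is the identity on `L (ker α)`, hence an isomorphism.

Conversely, for an `L`-flat extension `N → T → Q` and `g : Q' → Q`, admissibility makes the
pullback of the local extension `LN → LT ×_{LQ} LQ' → LQ'` along `ℓ^{Q'}` an `L`-flat extension.
The canonical map from `T ×_Q Q'` into it is `ℓ^N` on kernels, so it is surjective and kills
only elements killed by `ℓ`; it is therefore inverted by `L`, and `L`-flatness transfers.
-/
section ShortFive

variable {N N' P P' Y : Type*} [Group N] [Group N'] [Group P] [Group P'] [Group Y]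
  {i : N →* P} {s : P →* Y} {i' : N' →* P'} {s' : P' →* Y} {m : P →* P'} {a : N →* N'}

theorem MonoidHom.surjective_of_ker_le_range (hs : Function.Surjective s)
    (hs' : s'.ker ≤ i'.range) (hsm : s'.comp m = s) (hmi : m.comp i = i'.comp a)
    (ha : Function.Surjective a) : Function.Surjective m := by
  intro x
  obtain ⟨p, hp⟩ := hs (s' x)
  obtain ⟨n', hn'⟩ := hs' (show x * (m p)⁻¹ ∈ s'.ker by
    rw [MonoidHom.mem_ker, map_mul, map_inv, ← MonoidHom.comp_apply, hsm, hp, mul_inv_cancel])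
  obtain ⟨n, rfl⟩ := ha n'
  refine ⟨i n * p, ?_⟩
  rw [map_mul, ← MonoidHom.comp_apply, hmi, MonoidHom.comp_apply, hn', inv_mul_cancel_right]

theorem MonoidHom.ker_le_map_ker_of_injective (hs : s.ker ≤ i.range)
    (hi' : Function.Injective i') (hsm : s'.comp m = s) (hmi : m.comp i = i'.comp a) :
    m.ker ≤ a.ker.map i := by
  intro p hp
  obtain ⟨n, rfl⟩ := hs (show p ∈ s.ker by
    rw [← hsm, MonoidHom.mem_ker, MonoidHom.comp_apply, hp, map_one])
  refine ⟨n, hi' ?_, rfl⟩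
  rw [← MonoidHom.comp_apply, ← hmi, MonoidHom.comp_apply, hp, map_one]

end ShortFive

namespace XModHom

section Category

variable {A B C D : XMod}

theorem comp_f1 (g : XModHom B C) (f : XModHom A B) (x : A.M) :
    (comp g f).f1 x = g.f1 (f.f1 x) := rfl

theorem comp_f2 (g : XModHom B C) (f : XModHom A B) (x : A.G) :
    (comp g f).f2 x = g.f2 (f.f2 x) := rfl

theorem comp_assoc (f : XModHom A B) (g : XModHom B C) (h : XModHom C D) :
    comp (comp h g) f = comp h (comp g f) := rfl

theorem comp_id (f : XModHom A B) : comp f (id A) = f := rfl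

theorem id_comp (f : XModHom A B) : comp (id B) f = f := rfl

theorem ext_apply {f g : XModHom A B} (h1 : ∀ x, f.f1 x = g.f1 x) (h2 : ∀ x, f.f2 x = g.f2 x) :
    f = g :=
  ext (MonoidHom.ext h1) (MonoidHom.ext h2)

theorem congr_f1 {f g : XModHom A B} (h : f = g) (x : A.M) : f.f1 x = g.f1 x := by rw [h]

theorem congr_f2 {f g : XModHom A B} (h : f = g) (x : A.G) : f.f2 x = g.f2 x := by rw [h]

theorem comp_triv (f : XModHom B C) : comp f (triv A B) = triv A C :=
  ext_apply (fun _ => map_one f.f1) (fun _ => map_one f.f2)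

theorem triv_comp (f : XModHom A B) : comp (triv B C) f = triv A C := rfl

theorem isIso_id : IsIso (id A) := ⟨id A, rfl, rfl⟩

theorem IsIso.cancel_left {e : XModHom B C} (he : IsIso e) {x y : XModHom A B}
    (h : comp e x = comp e y) : x = y := by
  obtain ⟨e', he₁, -⟩ := he
  rw [← id_comp x, ← id_comp y, ← he₁, comp_assoc, comp_assoc, h]

theorem IsIso.cancel_right {e : XModHom A B} (he : IsIso e) {x y : XModHom B C}
    (h : comp x e = comp y e) : x = y := by
  obtain ⟨e', -, he₂⟩ := he
  rw [← comp_id x, ← comp_id y, ← he₂, ← comp_assoc, ← comp_assoc, h]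

theorem cancel_left_of_injective {k : XModHom B C} (hk₁ : Function.Injective k.f1)
    (hk₂ : Function.Injective k.f2) {x y : XModHom A B} (h : comp k x = comp k y) : x = y :=
  ext_apply (fun a => hk₁ (congr_f1 h a)) (fun a => hk₂ (congr_f2 h a))

theorem RegEpi.cancel_right {e : XModHom A B} (he : RegEpi e) {x y : XModHom B C}
    (h : comp x e = comp y e) : x = y :=
  ext_apply (fun b => by obtain ⟨a, rfl⟩ := he.1 b; exact congr_f1 h a)
    (fun b => by obtain ⟨a, rfl⟩ := he.2 b; exact congr_f2 h a)

theorem isIso_iff_bijective {f : XModHom A B} :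
    IsIso f ↔ Function.Bijective f.f1 ∧ Function.Bijective f.f2 := by
  constructor
  · rintro ⟨g, h₁, h₂⟩
    exact ⟨⟨Function.LeftInverse.injective (g := g.f1) (congr_f1 h₁),
        Function.RightInverse.surjective (g := g.f1) (congr_f1 h₂)⟩,
      ⟨Function.LeftInverse.injective (g := g.f2) (congr_f2 h₁),
        Function.RightInverse.surjective (g := g.f2) (congr_f2 h₂)⟩⟩
  · rintro ⟨h₁, h₂⟩
    let e₁ := MulEquiv.ofBijective f.f1 h₁
    let e₂ := MulEquiv.ofBijective f.f2 h₂
    have he₁ (x : B.M) : f.f1 (e₁.symm x) = x := e₁.apply_symm_apply x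
    have he₂ (x : B.G) : f.f2 (e₂.symm x) = x := e₂.apply_symm_apply x
    refine ⟨⟨e₁.symm.toMonoidHom, e₂.symm.toMonoidHom, fun m => h₂.1 ?_, fun b m => h₁.1 ?_⟩,
      ext_apply (fun x => e₁.symm_apply_apply x) (fun x => e₂.symm_apply_apply x),
      ext_apply he₁ he₂⟩
    · change f.f2 (A.d (e₁.symm m)) = f.f2 (e₂.symm (B.d m))
      rw [← f.comm_d, he₁, he₂]
    · change f.f1 (e₁.symm (B.act b m)) = f.f1 (A.act (e₂.symm b) (e₁.symm m))
      rw [he₁, f.equiv, he₁, he₂]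

theorem IsIso.regEpi {f : XModHom A B} (h : IsIso f) : RegEpi f :=
  ⟨(isIso_iff_bijective.1 h).1.2, (isIso_iff_bijective.1 h).2.2⟩

theorem regEpi_comp {g : XModHom B C} {f : XModHom A B} (hg : RegEpi g) (hf : RegEpi f) :
    RegEpi (comp g f) :=
  ⟨hg.1.comp hf.1, hg.2.comp hf.2⟩

theorem exists_comp_eq_of_regEpi {s : XModHom A B} {f : XModHom A C} (hs : RegEpi s)
    (h₁ : s.f1.ker ≤ f.f1.ker) (h₂ : s.f2.ker ≤ f.f2.ker) : ∃ φ : XModHom B C, comp φ s = f := by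
  let φ₁ := s.f1.liftOfSurjective hs.1 ⟨f.f1, h₁⟩
  let φ₂ := s.f2.liftOfSurjective hs.2 ⟨f.f2, h₂⟩
  have hφ₁ (a : A.M) : φ₁ (s.f1 a) = f.f1 a := s.f1.liftOfRightInverse_comp_apply _ _ _ a
  have hφ₂ (a : A.G) : φ₂ (s.f2 a) = f.f2 a := s.f2.liftOfRightInverse_comp_apply _ _ _ a
  refine ⟨⟨φ₁, φ₂, fun x => ?_, fun b x => ?_⟩, ext_apply hφ₁ hφ₂⟩
  · obtain ⟨a, rfl⟩ := hs.1 x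
    rw [hφ₁, s.comm_d, hφ₂, f.comm_d]
  · obtain ⟨c, rfl⟩ := hs.2 b
    obtain ⟨a, rfl⟩ := hs.1 x
    rw [← s.equiv, hφ₁, hφ₂, hφ₁, f.equiv]

end Category

section Kernel

variable {N N' T Q : XMod} {κ : XModHom N T} {α : XModHom T Q}

theorem isKernelOf_kerIncl (α : XModHom T Q) : IsKernelOf (kerIncl α) α := by
  refine ⟨ext_apply (fun x => x.2) (fun x => x.2), fun X u hu => ?_⟩
  refine ⟨⟨u.f1.codRestrict _ (congr_f1 hu), u.f2.codRestrict _ (congr_f2 hu),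
    fun n => Subtype.ext (u.comm_d n), fun b n => Subtype.ext (u.equiv b n)⟩, rfl, ?_⟩
  rintro v rfl
  rfl

theorem IsKernelOf.exists_isIso {κ' : XModHom N' T} (h : IsKernelOf κ α) (h' : IsKernelOf κ' α) :
    ∃ e : XModHom N' N, IsIso e ∧ comp κ e = κ' := by
  obtain ⟨v, hv, -⟩ := h.2 N' κ' h'.1
  obtain ⟨w, hw, -⟩ := h'.2 N κ h.1
  refine ⟨v, ⟨w, ?_, ?_⟩, hv⟩
  · exact (h'.2 N' κ' h'.1).unique (by rw [← comp_assoc, hw, hv]) (comp_id κ')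
  · exact (h.2 N κ h.1).unique (by rw [← comp_assoc, hv, hw]) (comp_id κ)

theorem IsKernelOf.injective_f1 (h : IsKernelOf κ α) : Function.Injective κ.f1 := by
  obtain ⟨e, he, hκe⟩ := h.exists_isIso (isKernelOf_kerIncl α)
  have hκe₁ : ⇑κ.f1 ∘ ⇑e.f1 = Subtype.val := funext (congr_f1 hκe)
  exact Function.Injective.of_comp_right (hκe₁ ▸ Subtype.val_injective) he.regEpi.1

theorem IsKernelOf.injective_f2 (h : IsKernelOf κ α) : Function.Injective κ.f2 := by
  obtain ⟨e, he, hκe⟩ := h.exists_isIso (isKernelOf_kerIncl α)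
  have hκe₂ : ⇑κ.f2 ∘ ⇑e.f2 = Subtype.val := funext (congr_f2 hκe)
  exact Function.Injective.of_comp_right (hκe₂ ▸ Subtype.val_injective) he.regEpi.2

theorem IsKernelOf.range_f1 (h : IsKernelOf κ α) : κ.f1.range = α.f1.ker := by
  obtain ⟨e, he, hκe⟩ := h.exists_isIso (isKernelOf_kerIncl α)
  rw [MonoidHom.range_eq_map, ← MonoidHom.range_eq_top.2 he.regEpi.1, ← MonoidHom.range_comp]
  exact (congrArg (MonoidHom.range ∘ f1) hκe).trans (Subgroup.range_subtype _)

theorem IsKernelOf.range_f2 (h : IsKernelOf κ α) : κ.f2.range = α.f2.ker := by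
  obtain ⟨e, he, hκe⟩ := h.exists_isIso (isKernelOf_kerIncl α)
  rw [MonoidHom.range_eq_map, ← MonoidHom.range_eq_top.2 he.regEpi.2, ← MonoidHom.range_comp]
  exact (congrArg (MonoidHom.range ∘ f2) hκe).trans (Subgroup.range_subtype _)

theorem IsKernelOf.of_isIso (h : IsKernelOf κ α) {N₂ T₂ Q₂ : XMod} {a : XModHom N₂ N}
    {b : XModHom T₂ T} {c : XModHom Q₂ Q} (ha : IsIso a) (hb : IsIso b) (hc : IsIso c)
    {κ₂ : XModHom N₂ T₂} {α₂ : XModHom T₂ Q₂}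
    (hκ : comp κ a = comp b κ₂) (hα : comp α b = comp c α₂) : IsKernelOf κ₂ α₂ := by
  obtain ⟨a', ha₁, ha₂⟩ := ha
  refine ⟨hc.cancel_left ?_, fun X u hu => ?_⟩
  · rw [comp_triv, ← comp_assoc, ← hα, comp_assoc, ← hκ, ← comp_assoc, h.1, triv_comp]
  have hbu : comp α (comp b u) = triv X Q := by
    rw [← comp_assoc, hα, comp_assoc, hu, comp_triv]
  obtain ⟨v, hv, hvu⟩ := h.2 X (comp b u) hbu
  refine ⟨comp a' v, hb.cancel_left ?_, fun y hy => ?_⟩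
  · calc comp b (comp κ₂ (comp a' v)) = comp (comp κ a) (comp a' v) := by rw [hκ]; rfl
      _ = comp b u := by rw [comp_assoc, ← comp_assoc v, ha₂]; exact hv
  · have hay : comp a y = v :=
      hvu _ (show comp κ (comp a y) = comp b u by rw [← comp_assoc, hκ, comp_assoc, hy])
    rw [← hay, ← comp_assoc, ha₁, id_comp]

end Kernel

section Extension

variable {N N' P P' Y : XMod} {i : XModHom N P} {s : XModHom P Y} {i' : XModHom N' P'}
  {s' : XModHom P' Y} {m : XModHom P P'} {a : XModHom N N'}

theorem RegEpi.of_comp_eq (hs : RegEpi s) (h' : IsKernelOf i' s') (hsm : comp s' m = s)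
    (hmi : comp m i = comp i' a) (ha : RegEpi a) : RegEpi m :=
  ⟨MonoidHom.surjective_of_ker_le_range hs.1 h'.range_f1.ge (congrArg f1 hsm)
      (congrArg f1 hmi) ha.1,
    MonoidHom.surjective_of_ker_le_range hs.2 h'.range_f2.ge (congrArg f2 hsm)
      (congrArg f2 hmi) ha.2⟩

theorem IsKernelOf.ker_f1_le_of_comp_eq (h : IsKernelOf i s) (h' : IsKernelOf i' s')
    (hsm : comp s' m = s) (hmi : comp m i = comp i' a) : m.f1.ker ≤ a.f1.ker.map i.f1 :=
  MonoidHom.ker_le_map_ker_of_injective h.range_f1.ge h'.injective_f1 (congrArg f1 hsm)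
    (congrArg f1 hmi)

theorem IsKernelOf.ker_f2_le_of_comp_eq (h : IsKernelOf i s) (h' : IsKernelOf i' s')
    (hsm : comp s' m = s) (hmi : comp m i = comp i' a) : m.f2.ker ≤ a.f2.ker.map i.f2 :=
  MonoidHom.ker_le_map_ker_of_injective h.range_f2.ge h'.injective_f2 (congrArg f2 hsm)
    (congrArg f2 hmi)

end Extension

end XModHom

open XModHom

theorem ShortExact.isIso_of_comp_eq {N N' P P' Y : XMod} {i : XModHom N P} {s : XModHom P Y}
    {i' : XModHom N' P'} {s' : XModHom P' Y} {m : XModHom P P'} {a : XModHom N N'}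
    (h : ShortExact i s) (h' : IsKernelOf i' s')
    (hsm : comp s' m = s) (hmi : comp m i = comp i' a) (ha : IsIso a) : IsIso m := by
  have hm := RegEpi.of_comp_eq h.2 h' hsm hmi ha.regEpi
  refine isIso_iff_bijective.2 ⟨⟨?_, hm.1⟩, ⟨?_, hm.2⟩⟩
  · rw [← MonoidHom.ker_eq_bot_iff, eq_bot_iff]
    refine (IsKernelOf.ker_f1_le_of_comp_eq h.1 h' hsm hmi).trans ?_
    rw [(MonoidHom.ker_eq_bot_iff _).2 (isIso_iff_bijective.1 ha).1.1, Subgroup.map_bot]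
  · rw [← MonoidHom.ker_eq_bot_iff, eq_bot_iff]
    refine (IsKernelOf.ker_f2_le_of_comp_eq h.1 h' hsm hmi).trans ?_
    rw [(MonoidHom.ker_eq_bot_iff _).2 (isIso_iff_bijective.1 ha).2.1, Subgroup.map_bot]

section Pullback

variable {N T Q Q' : XMod} (α : XModHom T Q) (g : XModHom Q' Q)

theorem pb_condition : comp α (pbFst α g) = comp g (pbSnd α g) :=
  ext_apply (fun w => w.2) (fun w => w.2)

def pbLift {W : XMod} (u : XModHom W T) (v : XModHom W Q') (h : comp α u = comp g v) :
    XModHom W (pbXMod α g) where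
  f1 := (u.f1.prod v.f1).codRestrict _ (congr_f1 h)
  f2 := (u.f2.prod v.f2).codRestrict _ (congr_f2 h)
  comm_d n := Subtype.ext (Prod.ext (u.comm_d n) (v.comm_d n))
  equiv b n := Subtype.ext (Prod.ext (u.equiv b n) (v.equiv b n))

variable {α g}

theorem pbSnd_comp_pbLift {W : XMod} {u : XModHom W T} {v : XModHom W Q'}
    (h : comp α u = comp g v) : comp (pbSnd α g) (pbLift α g u v h) = v := rfl

theorem pb_hom_ext {W : XMod} {x y : XModHom W (pbXMod α g)}
    (h₁ : comp (pbFst α g) x = comp (pbFst α g) y)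
    (h₂ : comp (pbSnd α g) x = comp (pbSnd α g) y) : x = y :=
  ext_apply (fun w => Subtype.ext (Prod.ext (congr_f1 h₁ w) (congr_f1 h₂ w)))
    (fun w => Subtype.ext (Prod.ext (congr_f2 h₁ w) (congr_f2 h₂ w)))

variable (α g)

theorem isPullbackSquare_pb : IsPullbackSquare (pbFst α g) (pbSnd α g) α g :=
  ⟨pb_condition α g, fun _ u v h =>
    ⟨pbLift α g u v h, ⟨rfl, rfl⟩, fun _ hw => pb_hom_ext (hw.1.trans rfl) (hw.2.trans rfl)⟩⟩

theorem pbFst_comp_pbIn (κ : XModHom N T) (h : comp α κ = triv N Q) :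
    comp (pbFst α g) (pbIn κ α g h) = κ := rfl

theorem pbSnd_comp_pbIn (κ : XModHom N T) (h : comp α κ = triv N Q) :
    comp (pbSnd α g) (pbIn κ α g h) = triv N Q' := rfl

variable {α}

theorem regEpi_pbSnd (hα : RegEpi α) : RegEpi (pbSnd α g) := by
  constructor
  · intro q
    obtain ⟨t, ht⟩ := hα.1 (g.f1 q)
    exact ⟨⟨(t, q), ht⟩, rfl⟩
  · intro q
    obtain ⟨t, ht⟩ := hα.2 (g.f2 q)
    exact ⟨⟨(t, q), ht⟩, rfl⟩

theorem isKernelOf_pbIn {κ : XModHom N T} (hκ : IsKernelOf κ α) :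
    IsKernelOf (pbIn κ α g hκ.1) (pbSnd α g) := by
  refine ⟨rfl, fun X u hu => ?_⟩
  have hu₁ (x : X.M) : (u.f1 x).1.2 = 1 := congr_f1 hu x
  have hu₂ (x : X.G) : (u.f2 x).1.2 = 1 := congr_f2 hu x
  have hαu : comp α (comp (pbFst α g) u) = triv X Q :=
    ext_apply (fun x => (u.f1 x).2.trans (by rw [hu₁, map_one]; rfl))
      (fun x => (u.f2 x).2.trans (by rw [hu₂, map_one]; rfl))
  obtain ⟨v, hv, hvu⟩ := hκ.2 X _ hαu
  refine ⟨v, pb_hom_ext hv (by rw [hu]; rfl), fun y hy => hvu y ?_⟩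
  rw [← hy]
  rfl

theorem ShortExact.pullback {κ : XModHom N T} (h : ShortExact κ α) :
    ShortExact (pbIn κ α g h.1.1) (pbSnd α g) :=
  ⟨isKernelOf_pbIn g h.1, regEpi_pbSnd g h.2⟩

end Pullback

namespace IsPullbackSquare

variable {P X Y Z : XMod} {p₁ : XModHom P X} {p₂ : XModHom P Y} {f : XModHom X Z}
  {h : XModHom Y Z}

theorem comp_isIso (hsq : IsPullbackSquare p₁ p₂ f h) {P₀ : XMod} {e : XModHom P₀ P}
    (he : IsIso e) : IsPullbackSquare (comp p₁ e) (comp p₂ e) f h := by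
  obtain ⟨e', he₁, he₂⟩ := he
  refine ⟨by rw [← comp_assoc, hsq.1]; rfl, fun W u v huv => ?_⟩
  obtain ⟨w, ⟨hw₁, hw₂⟩, hwu⟩ := hsq.2 W u v huv
  refine ⟨comp e' w, ⟨?_, ?_⟩, fun y hy => ?_⟩
  · rw [comp_assoc, ← comp_assoc w, he₂, id_comp, hw₁]
  · rw [comp_assoc, ← comp_assoc w, he₂, id_comp, hw₂]
  · rw [← hwu (comp e y) hy, ← comp_assoc, he₁, id_comp]

theorem of_isIso_comp {X₀ : XMod} {e : XModHom X X₀} {f₀ : XModHom X₀ Z} (he : IsIso e)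
    (hsq : IsPullbackSquare (comp e p₁) p₂ f₀ h) : IsPullbackSquare p₁ p₂ (comp f₀ e) h := by
  refine ⟨hsq.1, fun W u v huv => ?_⟩
  obtain ⟨w, ⟨hw₁, hw₂⟩, hwu⟩ := hsq.2 W (comp e u) v huv
  exact ⟨w, ⟨he.cancel_left hw₁, hw₂⟩, fun y hy => hwu y ⟨by rw [comp_assoc, hy.1], hy.2⟩⟩

theorem isKernelOf (hsq : IsPullbackSquare p₁ p₂ f h) {K : XMod} {k : XModHom K X}
    (hk : IsKernelOf k f) {k' : XModHom K P} (h₁ : comp p₁ k' = k) (h₂ : comp p₂ k' = triv K Y) :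
    IsKernelOf k' p₂ := by
  refine ⟨h₂, fun W u hu => ?_⟩
  have hfu : comp f (comp p₁ u) = triv W Z := by
    rw [← comp_assoc, hsq.1, comp_assoc, hu, comp_triv]
  obtain ⟨v, hv, hvu⟩ := hk.2 W (comp p₁ u) hfu
  have hkv : comp k' v = u :=
    (hsq.2 W (comp p₁ u) (comp p₂ u) (by rw [← comp_assoc, hsq.1]; rfl)).unique
      ⟨by rw [← comp_assoc, h₁, hv], by rw [← comp_assoc, h₂, triv_comp, hu]⟩ ⟨rfl, rfl⟩
  exact ⟨v, hkv, fun y hy => hvu y (show comp k y = comp p₁ u by rw [← h₁, comp_assoc, hy])⟩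

end IsPullbackSquare

theorem isPullbackSquare_of_shortExact {K P X Y Z : XMod} {i : XModHom K P} {s : XModHom P Y}
    {f : XModHom P X} {β : XModHom X Z} {h : XModHom Y Z} (hs : ShortExact i s)
    (hfi : IsKernelOf (comp f i) β) (hcomm : comp β f = comp h s) :
    IsPullbackSquare f s β h :=
  (isPullbackSquare_pb β h).comp_isIso
    (hs.isIso_of_comp_eq (isKernelOf_pbIn h hfi) (pbSnd_comp_pbLift hcomm)
      (pb_hom_ext rfl hs.1.1) isIso_id)

namespace LocalizationFunctor

variable (L : LocalizationFunctor)

theorem map_isIso {A B : XMod} {f : XModHom A B} (h : IsIso f) : IsIso (L.map f) := by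
  obtain ⟨g, h₁, h₂⟩ := h
  exact ⟨L.map g, by rw [← L.map_comp, h₁, L.map_id], by rw [← L.map_comp, h₂, L.map_id]⟩

theorem map_regEpi (hL : L.RegEpiLoc) {A B : XMod} {f : XModHom A B} (h : RegEpi f) :
    RegEpi (L.map f) := by
  refine ⟨fun y => ?_, fun y => ?_⟩
  · obtain ⟨b, rfl⟩ := (hL B).1 y
    obtain ⟨a, rfl⟩ := h.1 b
    exact ⟨(L.ell A).f1 a, (congr_f1 (L.natural f) a).symm⟩
  · obtain ⟨b, rfl⟩ := (hL B).2 y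
    obtain ⟨a, rfl⟩ := h.2 b
    exact ⟨(L.ell A).f2 a, (congr_f2 (L.natural f) a).symm⟩

theorem map_triv (hL : L.RegEpiLoc) (A B : XMod) :
    L.map (triv A B) = triv (L.obj A) (L.obj B) :=
  RegEpi.cancel_right (hL A) (by rw [← L.natural, comp_triv, triv_comp])

theorem eq_id_of_comp_ell {K : XMod} {ψ : XModHom (L.obj K) (L.obj K)}
    (h : comp ψ (L.ell K) = L.ell K) : ψ = XModHom.id (L.obj K) := by
  have hψ : L.map ψ = XModHom.id (L.obj (L.obj K)) :=
    IsIso.cancel_right (L.iso_map_ell K) (by rw [← L.map_comp, h, id_comp])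
  exact IsIso.cancel_left (L.iso_ell_obj K) (by rw [L.natural ψ, hψ, id_comp, comp_id])

theorem isLocal_of_comp_ell_eq_id {W : XMod} (r : XModHom (L.obj W) W)
    (hr : comp r (L.ell W) = XModHom.id W) : L.IsLocal W :=
  ⟨r, hr, L.eq_id_of_comp_ell (by rw [comp_assoc, hr, comp_id])⟩

theorem comp_map_comp_ell {A X : XMod} (f : XModHom A X) {r : XModHom (L.obj X) X}
    (hr : comp r (L.ell X) = XModHom.id X) : comp r (comp (L.map f) (L.ell A)) = f := by
  rw [← L.natural, ← comp_assoc, hr, id_comp]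

theorem comp_eq_comp_map {X Y : XMod} (f : XModHom X Y) (hX : L.IsLocal X)
    {rX : XModHom (L.obj X) X} {rY : XModHom (L.obj Y) Y} (hrX : comp rX (L.ell X) = XModHom.id X)
    (hrY : comp rY (L.ell Y) = XModHom.id Y) : comp f rX = comp rY (L.map f) :=
  IsIso.cancel_right hX (by rw [comp_assoc, hrX, comp_id, comp_assoc, L.comp_map_comp_ell f hrY])

theorem isLocal_pbXMod {X Y Z : XMod} (hX : L.IsLocal X) (hY : L.IsLocal Y)
    (hZ : L.IsLocal Z) (f : XModHom X Z) (h : XModHom Y Z) : L.IsLocal (pbXMod f h) := by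
  obtain ⟨rX, hrX, -⟩ := id hX
  obtain ⟨rY, hrY, -⟩ := id hY
  obtain ⟨rZ, hrZ, -⟩ := id hZ
  have hc : comp f (comp rX (L.map (pbFst f h))) = comp h (comp rY (L.map (pbSnd f h))) := by
    rw [← comp_assoc, L.comp_eq_comp_map f hX hrX hrZ, ← comp_assoc,
      L.comp_eq_comp_map h hY hrY hrZ, comp_assoc, comp_assoc, ← L.map_comp, ← L.map_comp,
      pb_condition]
  exact L.isLocal_of_comp_ell_eq_id (pbLift f h _ _ hc)
    (pb_hom_ext (L.comp_map_comp_ell _ hrX) (L.comp_map_comp_ell _ hrY))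

theorem isLocal_kerXMod (hL : L.RegEpiLoc) {X Y : XMod} (hX : L.IsLocal X) (hY : L.IsLocal Y)
    (α : XModHom X Y) : L.IsLocal (kerXMod α) := by
  obtain ⟨rX, hrX, -⟩ := id hX
  obtain ⟨rY, hrY, -⟩ := id hY
  have hu : comp α (comp rX (L.map (kerIncl α))) = triv _ _ := by
    rw [← comp_assoc, L.comp_eq_comp_map α hX hrX hrY, comp_assoc, ← L.map_comp,
      (isKernelOf_kerIncl α).1, L.map_triv hL, comp_triv]
  obtain ⟨r, hr, -⟩ := (isKernelOf_kerIncl α).2 _ _ hu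
  refine L.isLocal_of_comp_ell_eq_id r
    (cancel_left_of_injective (k := kerIncl α) Subtype.val_injective Subtype.val_injective ?_)
  rw [← comp_assoc, hr]
  exact L.comp_map_comp_ell _ hrX

theorem isKernelOf_map_of_isLocal {N T Q : XMod} (hN : L.IsLocal N) (hT : L.IsLocal T)
    (hQ : L.IsLocal Q) {κ : XModHom N T} {α : XModHom T Q} (h : IsKernelOf κ α) :
    IsKernelOf (L.map κ) (L.map α) := by
  obtain ⟨rN, hrN, hrN'⟩ := id hN
  obtain ⟨rT, hrT, hrT'⟩ := id hT
  obtain ⟨rQ, hrQ, hrQ'⟩ := id hQ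
  exact h.of_isIso ⟨_, hrN', hrN⟩ ⟨_, hrT', hrT⟩ ⟨_, hrQ', hrQ⟩
    (L.comp_eq_comp_map κ hN hrN hrT) (L.comp_eq_comp_map α hT hrT hrQ)

theorem lFlat_of_isLocal (hL : L.RegEpiLoc) {N T Q : XMod} (hN : L.IsLocal N)
    (hT : L.IsLocal T) (hQ : L.IsLocal Q) {κ : XModHom N T} {α : XModHom T Q}
    (h : ShortExact κ α) : L.LFlat κ α :=
  ⟨L.isKernelOf_map_of_isLocal hN hT hQ h.1, L.map_regEpi hL h.2⟩

theorem isIso_map_of_ker_le (hL : L.RegEpiLoc) {A B : XMod} {m : XModHom A B} (hm : RegEpi m)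
    (h₁ : m.f1.ker ≤ (L.ell A).f1.ker) (h₂ : m.f2.ker ≤ (L.ell A).f2.ker) : IsIso (L.map m) := by
  obtain ⟨φ, hφ⟩ := exists_comp_eq_of_regEpi hm h₁ h₂
  have hiso : IsIso (comp (L.map φ) (L.map m)) := by
    rw [← L.map_comp, hφ]
    exact L.iso_map_ell A
  obtain ⟨hb₁, hb₂⟩ := isIso_iff_bijective.1 hiso
  have hLm := L.map_regEpi hL hm
  exact isIso_iff_bijective.2 ⟨⟨Function.Injective.of_comp (f := (L.map φ).f1) hb₁.1, hLm.1⟩,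
    ⟨Function.Injective.of_comp (f := (L.map φ).f2) hb₂.1, hLm.2⟩⟩

theorem isIso_map_of_shortExact (hL : L.RegEpiLoc) {N P P' Y : XMod} {i : XModHom N P}
    {s : XModHom P Y} {i' : XModHom (L.obj N) P'} {s' : XModHom P' Y} {m : XModHom P P'}
    (h : ShortExact i s) (h' : IsKernelOf i' s') (hsm : comp s' m = s)
    (hmi : comp m i = comp i' (L.ell N)) : IsIso (L.map m) := by
  refine L.isIso_map_of_ker_le hL (RegEpi.of_comp_eq h.2 h' hsm hmi (hL N))
    ((IsKernelOf.ker_f1_le_of_comp_eq h.1 h' hsm hmi).trans ?_)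
    ((IsKernelOf.ker_f2_le_of_comp_eq h.1 h' hsm hmi).trans ?_)
  · rintro _ ⟨n, hn, rfl⟩
    rw [MonoidHom.mem_ker, ← comp_f1, L.natural, comp_f1, MonoidHom.mem_ker.1 hn, map_one]
  · rintro _ ⟨n, hn, rfl⟩
    rw [MonoidHom.mem_ker, ← comp_f2, L.natural, comp_f2, MonoidHom.mem_ker.1 hn, map_one]

variable {L}

theorem admissible_of_conditionallyFlat (hL : L.RegEpiLoc) (hCF : L.ConditionallyFlat) :
    L.Admissible := by
  intro T Q α hα
  have hse : ShortExact (kerIncl α) α := ⟨isKernelOf_kerIncl α, hα⟩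
  have hflat : L.LFlat (kerIncl α) α :=
    L.lFlat_of_isLocal hL (L.isLocal_kerXMod hL (L.iso_ell_obj T) (L.iso_ell_obj Q) α)
      (L.iso_ell_obj T) (L.iso_ell_obj Q) hse
  refine isPullbackSquare_of_shortExact (hCF _ _ _ _ _ hse hflat Q (L.ell Q)) ?_ ?_
  · rw [← L.map_comp, pbFst_comp_pbIn]
    exact hflat.1
  · rw [← L.map_comp, ← L.map_comp, pb_condition]

theorem Admissible.isPullbackSquare (hAdm : L.Admissible) {X Q : XMod} (hX : L.IsLocal X)
    {β : XModHom X (L.obj Q)} (hβ : RegEpi β) :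
    IsPullbackSquare (L.map (pbFst β (L.ell Q))) (L.map (pbSnd β (L.ell Q))) (L.map β)
      (L.map (L.ell Q)) := by
  obtain ⟨r, hr, hr'⟩ := id hX
  -- Admissibility only speaks about maps out of `L.obj X`: apply it to `β ∘ (ℓ^X)⁻¹`.
  have hβr : comp (comp β r) (L.ell X) = β := by rw [comp_assoc, hr, comp_id]
  have hj : IsIso (pbMapL β (comp β r) (L.ell Q) (L.ell X) hβr) :=
    ⟨pbMapL (comp β r) β (L.ell Q) r rfl,
      pb_hom_ext (congrArg (comp · (pbFst β (L.ell Q))) hr) rfl,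
      pb_hom_ext (congrArg (comp · (pbFst (comp β r) (L.ell Q))) hr') rfl⟩
  have hsq := (hAdm X Q (comp β r) (regEpi_comp hβ (IsIso.regEpi ⟨_, hr', hr⟩))).comp_isIso
    (L.map_isIso hj)
  rw [← L.map_comp, ← L.map_comp] at hsq
  have hsq' := IsPullbackSquare.of_isIso_comp (p₁ := L.map (pbFst β (L.ell Q)))
    (L.iso_map_ell X) (by rw [← L.map_comp]; exact hsq)
  rwa [← L.map_comp, hβr] at hsq'

theorem Admissible.lFlat_pullback (hL : L.RegEpiLoc) (hAdm : L.Admissible) {N X Q : XMod}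
    (hN : L.IsLocal N) (hX : L.IsLocal X) {κ : XModHom N X} {β : XModHom X (L.obj Q)}
    (h : ShortExact κ β) : L.LFlat (pbIn κ β (L.ell Q) h.1.1) (pbSnd β (L.ell Q)) :=
  ⟨(hAdm.isPullbackSquare hX h.2).isKernelOf
      (L.isKernelOf_map_of_isLocal hN hX (L.iso_ell_obj Q) h.1) (by rw [← L.map_comp]; rfl)
      (by rw [← L.map_comp, pbSnd_comp_pbIn, L.map_triv hL]),
    L.map_regEpi hL (regEpi_pbSnd _ h.2)⟩

theorem conditionallyFlat_of_admissible (hL : L.RegEpiLoc) (hAdm : L.Admissible) :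
    L.ConditionallyFlat := by
  intro N T Q κ α hse hflat Q' g
  have hE : L.IsLocal (pbXMod (L.map α) (L.map g)) :=
    L.isLocal_pbXMod (L.iso_ell_obj T) (L.iso_ell_obj Q') (L.iso_ell_obj Q) _ _
  have hseE := hflat.pullback (L.map g)
  have hS := hAdm.lFlat_pullback hL (L.iso_ell_obj N) hE hseE
  let m₀ := pbLift (L.map α) (L.map g) (comp (L.ell T) (pbFst α g)) (comp (L.ell Q') (pbSnd α g))
    (by rw [← comp_assoc, ← L.natural, comp_assoc, pb_condition, ← comp_assoc, L.natural,
      comp_assoc])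
  -- `m (t, q') = ((ℓ t, ℓ q'), q')`
  let m := pbLift (pbSnd (L.map α) (L.map g)) (L.ell Q') m₀ (pbSnd α g) rfl
  have hmi : comp m (pbIn κ α g hse.1.1) =
      comp (pbIn _ (pbSnd (L.map α) (L.map g)) (L.ell Q') hseE.1.1) (L.ell N) :=
    pb_hom_ext (pb_hom_ext (L.natural κ) (comp_triv _)) rfl
  have hm : IsIso (L.map m) :=
    L.isIso_map_of_shortExact hL (hse.pullback g) (hseE.pullback (L.ell Q')).1 rfl hmi
  refine ⟨hS.1.of_isIso (L.iso_map_ell N) hm isIso_id ?_ ?_, L.map_regEpi hL (regEpi_pbSnd g hse.2)⟩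
  · exact (L.map_comp _ _).symm.trans ((congrArg L.map hmi.symm).trans (L.map_comp _ _))
  · rw [← L.map_comp]
    rfl

end LocalizationFunctor

/-- For a regular-epi localization functor `L` on `XMod`,
conditional flatness is equivalent to admissibility for the class of regular
epimorphisms. -/
theorem conditionallyFlat_iff_admissible (L : LocalizationFunctor)
    (hL : L.RegEpiLoc) :
    L.ConditionallyFlat ↔ L.Admissible :=
  ⟨L.admissible_of_conditionallyFlat hL, L.conditionallyFlat_of_admissible hL⟩
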